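/- Fixed-point characterization of Tresca friction: let F > 0, γ > 0, and μ, u ∈ ℝⁿ, and let q(F,·) denote the projection onto the ball of radius F. Then μ = q(F, μ + γu) if and only if |μ| ≤ F and (u = 0 or μ = F u/|u|). -/
import Mathlib


noncomputable def ballProj {n : ℕ} (α : ℝ) (z : EuclideanSpace ℝ (Fin n)) :
    EuclideanSpace ℝ (Fin n) :=
  if ‖z‖ ≤ α then z else (α / ‖z‖) • z

/-- Fixed-point characterization of Tresca friction. -/
theorem tresca_fixed_point {n : ℕ} (F γ : ℝ) (hF : 0 < F) (hγ : 0 < γ)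
    (μ u : EuclideanSpace ℝ (Fin n)) :
    μ = ballProj F (μ + γ • u) ↔ (‖μ‖ ≤ F ∧ (u = 0 ∨ μ = (F / ‖u‖) • u)) := by
  constructor
  · intro h
    unfold ballProj at h
    split_ifs at h with hle
    · -- μ = μ + γ • u, so u = 0
      have hu : u = 0 := by
        have h0 : γ • u = 0 := (left_eq_add.mp h)
        exact (smul_eq_zero.mp h0).resolve_left (ne_of_gt hγ)
      subst hu
      constructor
      · simpa using hle
      · exact Or.inl rfl
    · push_neg at hle
      set z := μ + γ • u with hz
      have hzpos : (0:ℝ) < ‖z‖ := lt_trans hF hle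
      set c : ℝ := F / ‖z‖ with hc
      have hc0 : 0 < c := div_pos hF hzpos
      have hc1 : c < 1 := (div_lt_one hzpos).mpr hle
      have hnorm : ‖μ‖ = F := by
        rw [h, norm_smul, Real.norm_eq_abs, abs_of_pos hc0, hc,
          div_mul_cancel₀ _ (ne_of_gt hzpos)]
      -- μ = c • μ + (c*γ) • u
      have h2 : (1 - c) • μ = (c * γ) • u := by
        have : μ = c • μ + (c * γ) • u := by
          conv_lhs => rw [h, hz]
          rw [smul_add, smul_smul]
        calc (1 - c) • μ = μ - c • μ := by rw [sub_smul, one_smul]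
          _ = (c * γ) • u := sub_eq_iff_eq_add'.mpr this
      have h1c : (1 - c) ≠ 0 := by linarith
      set t : ℝ := (1 - c)⁻¹ * (c * γ) with ht
      have htpos : 0 < t := by
        apply mul_pos (inv_pos.mpr (by linarith)) (mul_pos hc0 hγ)
      have hμt : μ = t • u := by
        rw [ht, ← smul_smul, ← h2, smul_smul, inv_mul_cancel₀ h1c, one_smul]
      have hFt : F = t * ‖u‖ := by
        rw [← hnorm, hμt, norm_smul, Real.norm_eq_abs, abs_of_pos htpos]
      have hu0 : ‖u‖ ≠ 0 := by
        intro h0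
        rw [h0, mul_zero] at hFt
        linarith
      refine ⟨le_of_eq hnorm, Or.inr ?_⟩
      have : F / ‖u‖ = t := by
        rw [hFt, mul_div_assoc, div_self hu0, mul_one]
      rw [this, hμt]
  · rintro ⟨hle, hu | hμ⟩
    · subst hu
      unfold ballProj
      rw [smul_zero, add_zero, if_pos hle]
    · by_cases hu0 : u = 0
      · subst hu0
        rw [smul_zero] at hμ
        subst hμ
        unfold ballProj
        rw [smul_zero, add_zero, if_pos (by simpa using hF.le)]
      · have hun : (0:ℝ) < ‖u‖ := norm_pos_iff.mpr hu0
        have hz : μ + γ • u = (F / ‖u‖ + γ) • u := by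
          rw [hμ, add_smul]
        have hspos : 0 < F / ‖u‖ + γ := by positivity
        have hzn : ‖μ + γ • u‖ = F + γ * ‖u‖ := by
          rw [hz, norm_smul, Real.norm_eq_abs, abs_of_pos hspos, add_mul,
            div_mul_cancel₀ _ (ne_of_gt hun)]
        have hgt : ¬ ‖μ + γ • u‖ ≤ F := by
          rw [hzn]; push_neg; nlinarith
        unfold ballProj
        rw [if_neg hgt, hzn, hz, smul_smul, hμ]
        congr 1
        field_simp
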